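/- arXiv:2603.08010 — 2 statements merged into one kernel-verified Lean document; each statement's English description precedes it below -/
import Mathlib

section
/- Let g : ℕ → ℕ and let g* : ℕ → ℕ → ℕ → ℕ be primitive recursive such that for all x and s the limit L(x, s) := lim_t g* x s t exists (the sequence t ↦ g* x s t is eventually constant), and for every x the sequence s ↦ L(x, s) is eventually constant with limit g x (so g is Δ⁰₃ via the primitive recursive approximation g*). Then there exist injective primitive recursive functions f_A, f_B : ℕ → ℕ such that: every orbit of f_A is infinite; f_A has infinitely many ω-chain orbits and infinitely many ζ-chain orbits; (ℕ, f_A) and (ℕ, f_B) are isomorphic; and for every isomorphism h from (ℕ, f_A) to (ℕ, f_B), the function g is Turing reducible to the join h ⊕ h⁻¹, the function sending 2n to h n and 2n + 1 to h⁻¹ n. (Hard direction of PRCat(A) = Cone(Δ⁰₃) for injection structures with infinitely many ω-chains and infinitely many ζ-chains, weakened from primitive recursive to Turing reducibility.) -/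
/-- The orbit of `a` under `f`. -/
def Orbit (f : ℕ → ℕ) (a : ℕ) : Set ℕ := {b : ℕ | ∃ m n : ℕ, f^[m] a = f^[n] b}

/-- `h` is an isomorphism from the injection structure `(ℕ, f)` to `(ℕ, g)`. -/
def IsInjIso (f g h : ℕ → ℕ) : Prop :=
  Function.Bijective h ∧ ∀ n : ℕ, h (f n) = g (h n)

/-- The orbit of `a` under `f` is an ω-chain. -/
def IsOmegaChain (f : ℕ → ℕ) (a : ℕ) : Prop :=
  (Orbit f a).Infinite ∧ ∃ b ∈ Orbit f a, b ∉ Set.range f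

/-- The orbit of `a` under `f` is a ζ-chain. -/
def IsZetaChain (f : ℕ → ℕ) (a : ℕ) : Prop :=
  (Orbit f a).Infinite ∧ ∀ b ∈ Orbit f a, b ∈ Set.range f

/-- Partial recursiveness relative to an oracle `g`. -/
inductive RecursiveIn' (g : ℕ →. ℕ) : (ℕ →. ℕ) → Prop
  | zero : RecursiveIn' g (pure 0)
  | succ : RecursiveIn' g ↑Nat.succ
  | left : RecursiveIn' g ↑fun n : ℕ => n.unpair.1
  | right : RecursiveIn' g ↑fun n : ℕ => n.unpair.2
  | oracle : RecursiveIn' g g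
  | pair {f h : ℕ →. ℕ} : RecursiveIn' g f → RecursiveIn' g h →
      RecursiveIn' g fun n => Nat.pair <$> f n <*> h n
  | comp {f h : ℕ →. ℕ} : RecursiveIn' g f → RecursiveIn' g h →
      RecursiveIn' g fun n => h n >>= f
  | prec {f h : ℕ →. ℕ} : RecursiveIn' g f → RecursiveIn' g h →
      RecursiveIn' g (Nat.unpaired fun a n =>
        n.rec (f a) fun y IH => do let i ← IH; h (Nat.pair a (Nat.pair y i)))
  | rfind {f : ℕ →. ℕ} : RecursiveIn' g f →
      RecursiveIn' g fun a => Nat.rfind fun n => (fun m => m = 0) <$> f (Nat.pair a n)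

/-- `f` is Turing reducible to `g`. -/
def TuringReducible' (f g : ℕ →. ℕ) : Prop := RecursiveIn' g f

/-- The join of two total functions: `2n ↦ h n`, `2n + 1 ↦ h' n`. -/
def join (h h' : ℕ → ℕ) : ℕ → ℕ := fun n => if n % 2 = 0 then h (n / 2) else h' (n / 2)

/-!
Both structures are unions of columns `{⟨c, j⟩ | j ∈ ℕ}`, each column a single orbit of a map
`chainSucc p` built in stages from a predicate `p` on stages: the column is a ζ-chain if `p` holds at
infinitely many stages and an ω-chain otherwise. In `injA` the even columns are ζ-chains and the odd
ones ω-chains. In `injB` the column `⟨x, ⟨s, k⟩⟩` is confirmed at stage `u` when `gs x (s + i) u = k`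
for every `i` below the number of earlier confirmations, so it is confirmed infinitely often exactly
when `L x s' = k` for all `s' ≥ s`. Both structures have infinitely many chains of each kind and no
finite orbits, hence are isomorphic: a connected injective self-map of an infinite set is conjugate
to the successor on `ℕ` or on `ℤ`. Given an isomorphism `h`, the oracle tells whether a column of
`injB` is a ζ-chain by the parity of the column of `h⁻¹` of its first element, and `g x` is the `k`
of the first ζ-column `⟨x, ⟨s, k⟩⟩`.
-/

open Function

section Conjugacy

variable {α : Type*} {s : α → α}

theorem iterate_injective_of_connected [Infinite α] (hs : Injective s)
    (hconn : ∀ a b, ∃ m n, s^[m] a = s^[n] b) (a : α) : Injective fun n => s^[n] a := by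
  intro m n hmn
  by_contra hne
  wlog hlt : m < n generalizing m n
  · exact this hmn.symm (Ne.symm hne) (by omega)
  have hper : IsPeriodicPt s (n - m) (s^[m] a) := by
    change s^[n - m] (s^[m] a) = s^[m] a
    rw [← iterate_add_apply, Nat.sub_add_cancel hlt.le]
    exact hmn.symm
  -- every point lies on the finite cycle through `s^[m] a`
  have hcycle : ∀ y, y ∈ (fun k => s^[k] (s^[m] a)) '' Set.Iio (n - m) := by
    intro y
    obtain ⟨i, j, hij⟩ := hconn (s^[m] a) y
    have hj : j ≤ i + j * (n - m) := le_add_left (Nat.le_mul_of_pos_right j (by omega))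
    refine ⟨(i + j * (n - m) - j) % (n - m), Nat.mod_lt _ (by omega), hs.iterate j ?_⟩
    dsimp only
    rw [hper.iterate_mod_apply, ← iterate_add_apply, Nat.add_sub_cancel' hj, iterate_add_apply,
      (hper.const_mul j).eq, hij]
  exact Set.infinite_univ ((Set.finite_Iio _).image _ |>.subset fun y _ => hcycle y)

theorem bijective_iterate_of_notMem_range (hs : Injective s)
    (hconn : ∀ a b, ∃ m n, s^[m] a = s^[n] b) {b : α} (hb : b ∉ Set.range s) :
    Bijective fun n => s^[n] b := by
  constructor
  · intro m n hmn
    by_contra hne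
    wlog hlt : m < n generalizing m n
    · exact this hmn.symm (Ne.symm hne) (by omega)
    apply hb
    obtain ⟨k, rfl⟩ := Nat.exists_eq_add_of_lt hlt
    refine ⟨s^[k] b, hs.iterate m ?_⟩
    simp only at hmn
    rw [← iterate_succ_apply' s, ← iterate_add_apply, hmn]
    rfl
  · intro y
    obtain ⟨i, j, hij⟩ := hconn b y
    rcases le_or_gt j i with hji | hij'
    · refine ⟨i - j, hs.iterate j ?_⟩
      simp only
      rw [← iterate_add_apply, Nat.add_sub_cancel' hji, hij]
    · exfalso
      apply hb
      obtain ⟨k, rfl⟩ := Nat.exists_eq_add_of_lt hij'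
      refine ⟨s^[k] y, hs.iterate i ?_⟩
      rw [hij, ← iterate_succ_apply' s, ← iterate_add_apply]
      rfl

theorem exists_semiconj_nat_succ (hs : Injective s) (hconn : ∀ a b, ∃ m n, s^[m] a = s^[n] b)
    (hsurj : ¬Surjective s) : ∃ e : ℕ ≃ α, Semiconj e Nat.succ s := by
  obtain ⟨b, hb⟩ := not_forall.mp hsurj
  exact ⟨Equiv.ofBijective _ (bijective_iterate_of_notMem_range hs hconn hb),
    fun n => iterate_succ_apply' s n b⟩

theorem exists_semiconj_int_succ [Infinite α] (hs : Bijective s)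
    (hconn : ∀ a b, ∃ m n, s^[m] a = s^[n] b) : ∃ e : ℤ ≃ α, Semiconj e (· + 1) s := by
  set σ := Equiv.ofBijective s hs
  obtain ⟨a⟩ := (inferInstance : Nonempty α)
  have hσ : ∀ (n : ℕ) b, (σ ^ (n : ℤ)) b = s^[n] b := fun n b => by
    rw [zpow_natCast, Equiv.Perm.coe_pow]; rfl
  have hinj : Injective fun z : ℤ => (σ ^ z) a := by
    intro z w hzw
    wlog hle : w ≤ z generalizing z w
    · exact (this hzw.symm (by omega)).symm
    obtain ⟨k, hk⟩ := Int.eq_ofNat_of_zero_le (sub_nonneg.mpr hle)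
    have hfix : s^[k] ((σ ^ w) a) = s^[0] ((σ ^ w) a) := by
      rw [← hσ, ← Equiv.Perm.mul_apply, ← zpow_add, ← hk, sub_add_cancel]
      exact hzw
    have := iterate_injective_of_connected hs.1 hconn _ hfix
    omega
  have hsurj : Surjective fun z : ℤ => (σ ^ z) a := by
    intro y
    obtain ⟨i, j, hij⟩ := hconn a y
    refine ⟨i - j, (σ ^ (j : ℤ)).injective ?_⟩
    simp only
    rw [← Equiv.Perm.mul_apply, ← zpow_add, add_sub_cancel, hσ, hσ, hij]
  refine ⟨Equiv.ofBijective _ ⟨hinj, hsurj⟩, fun z => ?_⟩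
  change (σ ^ (z + 1)) a = s ((σ ^ z) a)
  rw [add_comm, zpow_one_add, Equiv.Perm.mul_apply]
  rfl

theorem exists_equiv_semiconj {β : Type*} [Infinite α] [Infinite β] {t : β → β}
    (hs : Injective s) (hsconn : ∀ a b, ∃ m n, s^[m] a = s^[n] b)
    (ht : Injective t) (htconn : ∀ a b, ∃ m n, t^[m] a = t^[n] b)
    (hst : Surjective s ↔ Surjective t) : ∃ E : α ≃ β, Semiconj E s t := by
  by_cases hsurj : Surjective s
  · obtain ⟨e₁, h₁⟩ := exists_semiconj_int_succ ⟨hs, hsurj⟩ hsconn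
    obtain ⟨e₂, h₂⟩ := exists_semiconj_int_succ ⟨ht, hst.mp hsurj⟩ htconn
    exact ⟨e₁.symm.trans e₂, h₂.comp_left (h₁.inverse_left e₁.left_inv e₁.right_inv)⟩
  · obtain ⟨e₁, h₁⟩ := exists_semiconj_nat_succ hs hsconn hsurj
    obtain ⟨e₂, h₂⟩ := exists_semiconj_nat_succ ht htconn (hst.not.mp hsurj)
    exact ⟨e₁.symm.trans e₂, h₂.comp_left (h₁.inverse_left e₁.left_inv e₁.right_inv)⟩

end Conjugacy

theorem exists_equiv_mem_iff {α β : Type*} [Countable α] [Countable β] {S : Set α} {T : Set β}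
    (hS : S.Infinite) (hSc : Sᶜ.Infinite) (hT : T.Infinite) (hTc : Tᶜ.Infinite) :
    ∃ σ : α ≃ β, ∀ a, σ a ∈ T ↔ a ∈ S := by
  classical
  have := hS.to_subtype; have := hSc.to_subtype; have := hT.to_subtype; have := hTc.to_subtype
  obtain ⟨e⟩ := nonempty_equiv_of_countable (α := S) (β := T)
  obtain ⟨f⟩ := nonempty_equiv_of_countable (α := ↥Sᶜ) (β := ↥Tᶜ)
  refine ⟨(Equiv.sumCompl (· ∈ S)).symm.trans ((Equiv.sumCongr e f).trans (Equiv.sumCompl (· ∈ T))),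
    fun a => ?_⟩
  by_cases ha : a ∈ S
  · simp only [Equiv.trans_apply, Equiv.sumCompl_symm_apply_of_pos ha, Equiv.sumCongr_apply,
      Sum.map_inl, ha, iff_true]
    exact (e ⟨a, ha⟩).2
  · simp only [Equiv.trans_apply, Equiv.sumCompl_symm_apply_of_neg ha, Equiv.sumCongr_apply,
      Sum.map_inr, ha, iff_false]
    exact (f ⟨a, ha⟩).2

theorem IsInjIso.image_orbit {f g h : ℕ → ℕ} (hh : IsInjIso f g h) (a : ℕ) :
    h '' Orbit f a = Orbit g (h a) := by
  ext y
  obtain ⟨x, rfl⟩ := hh.1.2 y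
  have hsc : Semiconj h f g := hh.2
  simp only [hh.1.1.mem_set_image, Orbit, Set.mem_ofPred_eq, ← (hsc.iterate_right _).eq,
    hh.1.1.eq_iff]

theorem IsInjIso.isZetaChain_iff {f g h : ℕ → ℕ} (hh : IsInjIso f g h) (a : ℕ) :
    IsZetaChain g (h a) ↔ IsZetaChain f a := by
  have hrange : ∀ x, h x ∈ Set.range g ↔ x ∈ Set.range f := fun x => by
    refine ⟨fun ⟨y, hy⟩ => ?_, fun ⟨y, hy⟩ => ⟨h y, hy ▸ (hh.2 y).symm⟩⟩
    obtain ⟨z, rfl⟩ := hh.1.2 y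
    exact ⟨z, hh.1.1 (by rw [hh.2, hy])⟩
  simp only [IsZetaChain, ← hh.image_orbit, Set.infinite_image_iff hh.1.1.injOn,
    Set.forall_mem_image, hrange]

section ColumnMap

def columnMap (s : ℕ → ℕ → ℕ) (n : ℕ) : ℕ := Nat.pair n.unpair.1 (s n.unpair.1 n.unpair.2)

variable {s t : ℕ → ℕ → ℕ}

theorem exists_eq_pair (n : ℕ) : ∃ c j, n = Nat.pair c j := ⟨_, _, (Nat.pair_unpair n).symm⟩

@[simp]
theorem columnMap_pair (c j : ℕ) : columnMap s (Nat.pair c j) = Nat.pair c (s c j) := by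
  simp [columnMap]

theorem iterate_columnMap_pair (c j m : ℕ) :
    (columnMap s)^[m] (Nat.pair c j) = Nat.pair c ((s c)^[m] j) := by
  induction m with
  | zero => rfl
  | succ m ih => rw [iterate_succ_apply', ih, columnMap_pair, iterate_succ_apply']

theorem columnMap_injective (hs : ∀ c, Injective (s c)) : Injective (columnMap s) := by
  intro a b h
  obtain ⟨c, j, rfl⟩ := exists_eq_pair a
  obtain ⟨c', j', rfl⟩ := exists_eq_pair b
  simp only [columnMap_pair, Nat.pair_eq_pair] at h ⊢
  obtain ⟨rfl, h⟩ := h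
  exact ⟨rfl, hs c h⟩

theorem pair_mem_range_columnMap {c j : ℕ} :
    Nat.pair c j ∈ Set.range (columnMap s) ↔ j ∈ Set.range (s c) := by
  constructor
  · rintro ⟨n, hn⟩
    obtain ⟨c', j', rfl⟩ := exists_eq_pair n
    rw [columnMap_pair, Nat.pair_eq_pair] at hn
    obtain ⟨rfl, rfl⟩ := hn
    exact ⟨j', rfl⟩
  · rintro ⟨j', rfl⟩
    exact ⟨Nat.pair c j', columnMap_pair c j'⟩

section Column

variable {c : ℕ} (hc : ∀ a b, ∃ m n, (s c)^[m] a = (s c)^[n] b)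
include hc

theorem orbit_columnMap (j : ℕ) : Orbit (columnMap s) (Nat.pair c j) = Set.range (Nat.pair c) := by
  ext x
  obtain ⟨c', j', rfl⟩ := exists_eq_pair x
  simp only [Orbit, Set.mem_ofPred_eq, iterate_columnMap_pair, Nat.pair_eq_pair, Set.mem_range]
  constructor
  · rintro ⟨m, n, rfl, -⟩
    exact ⟨j', rfl, rfl⟩
  · rintro ⟨j'', rfl, -⟩
    obtain ⟨m, n, h⟩ := hc j j'
    exact ⟨m, n, rfl, h⟩

theorem orbit_columnMap_infinite (j : ℕ) : (Orbit (columnMap s) (Nat.pair c j)).Infinite := by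
  rw [orbit_columnMap hc]
  exact Set.infinite_range_of_injective fun a b h => (Nat.pair_eq_pair.mp h).2

theorem isZetaChain_columnMap_iff (j : ℕ) :
    IsZetaChain (columnMap s) (Nat.pair c j) ↔ Surjective (s c) := by
  rw [IsZetaChain, and_iff_right (orbit_columnMap_infinite hc j), orbit_columnMap hc]
  simp only [Set.forall_mem_range, pair_mem_range_columnMap]
  rfl

theorem isOmegaChain_columnMap_iff (j : ℕ) :
    IsOmegaChain (columnMap s) (Nat.pair c j) ↔ ¬Surjective (s c) := by
  rw [IsOmegaChain, and_iff_right (orbit_columnMap_infinite hc j), orbit_columnMap hc]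
  simp only [Set.exists_range_iff, pair_mem_range_columnMap]
  simp [Surjective]

end Column

theorem infinite_setOf_orbit_columnMap (hconn : ∀ c a b, ∃ m n, (s c)^[m] a = (s c)^[n] b)
    {R : ℕ → Prop} {C : Set ℕ} (hC : C.Infinite) (hR : ∀ c ∈ C, R (Nat.pair c 0)) :
    {O : Set ℕ | ∃ n, O = Orbit (columnMap s) n ∧ R n}.Infinite := by
  have hinj : Injective fun c => Orbit (columnMap s) (Nat.pair c 0) := by
    intro c c' h
    simp only [orbit_columnMap (hconn _)] at h
    obtain ⟨j, hj⟩ := h ▸ Set.mem_range_self (f := Nat.pair c) 0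
    exact (Nat.pair_eq_pair.mp hj).1.symm
  exact (hC.image hinj.injOn).mono <| Set.image_subset_iff.mpr fun c hc => ⟨_, rfl, hR c hc⟩

theorem isInjIso_columnMap (σ : ℕ ≃ ℕ) (E : ℕ → ℕ ≃ ℕ)
    (hE : ∀ c, Semiconj (E c) (s c) (t (σ c))) :
    IsInjIso (columnMap s) (columnMap t)
      ((Nat.pairEquiv.symm.trans (Equiv.prodShear σ E)).trans Nat.pairEquiv) := by
  refine ⟨Equiv.bijective _, fun n => ?_⟩
  obtain ⟨c, j, rfl⟩ := exists_eq_pair n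
  simp [(hE c).eq]

theorem exists_isInjIso_columnMap (hs : ∀ c, Injective (s c))
    (hsconn : ∀ c a b, ∃ m n, (s c)^[m] a = (s c)^[n] b) (ht : ∀ c, Injective (t c))
    (htconn : ∀ c a b, ∃ m n, (t c)^[m] a = (t c)^[n] b)
    (hsζ : {c | Surjective (s c)}.Infinite) (hsω : {c | ¬Surjective (s c)}.Infinite)
    (htζ : {c | Surjective (t c)}.Infinite) (htω : {c | ¬Surjective (t c)}.Infinite) :
    ∃ h, IsInjIso (columnMap s) (columnMap t) h := by
  obtain ⟨σ, hσ⟩ := exists_equiv_mem_iff hsζ hsω htζ htω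
  choose E hE using fun c =>
    exists_equiv_semiconj (hs c) (hsconn c) (ht (σ c)) (htconn (σ c)) (hσ c).symm
  exact ⟨_, isInjIso_columnMap σ E hE⟩

end ColumnMap

section Chain

open Filter

variable (p : ℕ → Bool)

def leftEnd : ℕ → ℕ
  | 0 => 0
  | u + 1 => if p u then 2 * u + 1 else leftEnd u

/-- Stage `u` adds `2u` and `2u + 1`. The even numbers form a spine `0 → 2 → 4 → ⋯`; if `p u`, then
`2u + 1` is prepended to the chain, mapping to its previous left end `leftEnd p u`, and otherwise it
is inserted between `2u` and `2u + 2`. -/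
def chainSucc (j : ℕ) : ℕ :=
  if j % 2 = 0 then (if p (j / 2) then j + 2 else j + 1)
  else if p (j / 2) then leftEnd p (j / 2) else j + 1

variable {p}

theorem chainSucc_two_mul (u : ℕ) : chainSucc p (2 * u) = if p u then 2 * u + 2 else 2 * u + 1 := by
  simp [chainSucc]

theorem chainSucc_two_mul_add_one (u : ℕ) :
    chainSucc p (2 * u + 1) = if p u then leftEnd p u else 2 * u + 2 := by
  simp [chainSucc, Nat.add_mod, Nat.add_div]

theorem leftEnd_lt (u : ℕ) : leftEnd p u < 2 * u + 1 := by
  induction u with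
  | zero => simp [leftEnd]
  | succ u ih => rw [leftEnd]; split <;> omega

theorem leftEnd_mono : Monotone (leftEnd p) := by
  refine monotone_nat_of_le_succ fun u => ?_
  have := leftEnd_lt (p := p) u
  rw [leftEnd]
  split <;> omega

theorem two_mul_add_one_le_leftEnd {u v : ℕ} (hu : p u) (huv : u < v) :
    2 * u + 1 ≤ leftEnd p v := by
  calc 2 * u + 1 = leftEnd p (u + 1) := by simp [leftEnd, hu]
    _ ≤ leftEnd p v := leftEnd_mono huv

theorem leftEnd_eq_zero_or (u : ℕ) : leftEnd p u = 0 ∨ ∃ v, p v ∧ leftEnd p u = 2 * v + 1 := by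
  induction u with
  | zero => simp [leftEnd]
  | succ u ih =>
    rw [leftEnd]
    split
    · exact .inr ⟨u, by assumption, rfl⟩
    · exact ih

theorem leftEnd_eq_of_forall_not {u v : ℕ} (huv : u ≤ v) (h : ∀ w, u ≤ w → w < v → ¬p w) :
    leftEnd p v = leftEnd p u := by
  induction v, huv using Nat.le_induction with
  | base => rfl
  | succ v huv ih =>
    simp only [leftEnd, h v huv (by omega), if_false, Bool.false_eq_true]
    exact ih fun w hw hwv => h w hw (by omega)

theorem eq_of_leftEnd_eq {u u' : ℕ} (hu : p u) (hu' : p u') (h : leftEnd p u = leftEnd p u') :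
    u = u' := by
  rcases lt_trichotomy u u' with hlt | rfl | hlt
  · have := two_mul_add_one_le_leftEnd hu hlt; have := leftEnd_lt (p := p) u; omega
  · rfl
  · have := two_mul_add_one_le_leftEnd hu' hlt; have := leftEnd_lt (p := p) u'; omega

theorem leftEnd_ne_two_mul_add_one {u v : ℕ} (hv : ¬p v) : leftEnd p u ≠ 2 * v + 1 := by
  rcases leftEnd_eq_zero_or (p := p) u with h | ⟨w, hw, h⟩
  · omega
  · intro he
    obtain rfl : w = v := by omega
    exact hv hw

theorem leftEnd_ne_two_mul_add_two (u v : ℕ) : leftEnd p u ≠ 2 * v + 2 := by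
  rcases leftEnd_eq_zero_or (p := p) u with h | ⟨w, hw, h⟩ <;> omega

theorem chainSucc_injective : Injective (chainSucc p) := by
  -- the spine values `2u + 2` and `2u + 1` (for `¬p u`) never meet the values `leftEnd p u`
  intro j j' h
  obtain ⟨u, rfl | rfl⟩ := Nat.even_or_odd' j <;> obtain ⟨u', rfl | rfl⟩ := Nat.even_or_odd' j' <;>
    simp only [chainSucc_two_mul, chainSucc_two_mul_add_one] at h <;>
    split_ifs at h with hu hu' <;>
    first
    | omega
    | exact absurd h (leftEnd_ne_two_mul_add_two _ _)
    | exact absurd h.symm (leftEnd_ne_two_mul_add_two _ _)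
    | exact absurd h (leftEnd_ne_two_mul_add_one ‹_›)
    | exact absurd h.symm (leftEnd_ne_two_mul_add_one ‹_›)
    | rw [eq_of_leftEnd_eq ‹_› ‹_› h]
    | (obtain rfl : u = u' := by omega
       simp_all)

theorem exists_iterate_chainSucc_eq_two_mul (j : ℕ) : ∃ u m, (chainSucc p)^[m] j = 2 * u := by
  induction j using Nat.strong_induction_on with
  | _ j ih =>
    obtain ⟨u, rfl | rfl⟩ := Nat.even_or_odd' j
    · exact ⟨u, 0, rfl⟩
    · by_cases hu : p u
      · obtain ⟨v, m, hm⟩ := ih _ (leftEnd_lt (p := p) u)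
        exact ⟨v, m + 1, by rwa [iterate_succ_apply, chainSucc_two_mul_add_one, if_pos hu]⟩
      · exact ⟨u + 1, 1, by rw [iterate_one, chainSucc_two_mul_add_one, if_neg hu]; ring⟩

theorem exists_iterate_chainSucc_two_mul {u v : ℕ} (huv : u ≤ v) :
    ∃ m, (chainSucc p)^[m] (2 * u) = 2 * v := by
  induction v, huv using Nat.le_induction with
  | base => exact ⟨0, rfl⟩
  | succ v _ ih =>
    obtain ⟨m, hm⟩ := ih
    by_cases hv : p v
    · exact ⟨m + 1, by rw [iterate_succ_apply', hm, chainSucc_two_mul, if_pos hv]; ring⟩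
    · refine ⟨m + 2, ?_⟩
      rw [iterate_succ_apply', iterate_succ_apply', hm, chainSucc_two_mul, if_neg hv,
        chainSucc_two_mul_add_one, if_neg hv]
      ring

theorem chainSucc_connected (a b : ℕ) : ∃ m n, (chainSucc p)^[m] a = (chainSucc p)^[n] b := by
  obtain ⟨u, m, hm⟩ := exists_iterate_chainSucc_eq_two_mul (p := p) a
  obtain ⟨v, n, hn⟩ := exists_iterate_chainSucc_eq_two_mul (p := p) b
  obtain ⟨m', hm'⟩ := exists_iterate_chainSucc_two_mul (p := p) (le_max_left u v)
  obtain ⟨n', hn'⟩ := exists_iterate_chainSucc_two_mul (p := p) (le_max_right u v)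
  exact ⟨m' + m, n' + n, by rw [iterate_add_apply, iterate_add_apply, hm, hn, hm', hn']⟩

theorem leftEnd_mem_range_iff (u : ℕ) :
    leftEnd p u ∈ Set.range (chainSucc p) ↔ ∃ w ≥ u, p w := by
  constructor
  · rintro ⟨j, hj⟩
    obtain ⟨w, rfl | rfl⟩ := Nat.even_or_odd' j
    · rw [chainSucc_two_mul] at hj
      split at hj
      · exact absurd hj.symm (leftEnd_ne_two_mul_add_two _ _)
      · exact absurd hj.symm (leftEnd_ne_two_mul_add_one ‹_›)
    · rw [chainSucc_two_mul_add_one] at hj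
      split at hj
      · refine ⟨w, not_lt.mp fun hwu => ?_, ‹_›⟩
        have := two_mul_add_one_le_leftEnd ‹_› hwu
        have := leftEnd_lt (p := p) w
        omega
      · exact absurd hj.symm (leftEnd_ne_two_mul_add_two _ _)
  · intro h
    classical
    refine ⟨2 * Nat.find h + 1, ?_⟩
    obtain ⟨hle, hp⟩ := Nat.find_spec h
    rw [chainSucc_two_mul_add_one, if_pos hp]
    exact leftEnd_eq_of_forall_not hle fun w hw hwlt => by
      simpa [hw] using Nat.find_min h hwlt

theorem surjective_chainSucc_iff : Surjective (chainSucc p) ↔ ∃ᶠ u in atTop, p u := by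
  rw [frequently_atTop]
  refine ⟨fun h u => (leftEnd_mem_range_iff u).mp (h _), fun h j => ?_⟩
  obtain ⟨u, rfl | rfl⟩ := Nat.even_or_odd' j
  · rcases u with _ | u
    · exact (leftEnd_mem_range_iff 0).mpr (h 0)
    · by_cases hu : p u
      · exact ⟨2 * u, by rw [chainSucc_two_mul, if_pos hu]; ring⟩
      · exact ⟨2 * u + 1, by rw [chainSucc_two_mul_add_one, if_neg hu]; ring⟩
  · by_cases hu : p u
    · have := (leftEnd_mem_range_iff (p := p) (u + 1)).mpr (h _)
      rwa [leftEnd, if_pos hu] at this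
    · exact ⟨2 * u, by rw [chainSucc_two_mul, if_neg hu]⟩

end Chain

section Confirmation

open Filter

variable (T : ℕ → ℕ → Bool)

def confirmCount : ℕ → ℕ
  | 0 => 0
  | u + 1 => confirmCount u + if T u (confirmCount u) then 1 else 0

def confirms (u : ℕ) : Bool := T u (confirmCount T u)

variable {T}

theorem confirmCount_succ (u : ℕ) :
    confirmCount T (u + 1) = confirmCount T u + if confirms T u then 1 else 0 := rfl

theorem confirmCount_mono : Monotone (confirmCount T) :=
  monotone_nat_of_le_succ fun u => by rw [confirmCount_succ]; omega

theorem frequently_confirms (h : ∀ n, ∀ᶠ u in atTop, T u n) : ∃ᶠ u in atTop, confirms T u := by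
  intro hev
  obtain ⟨U, hU⟩ := eventually_atTop.mp hev
  -- once confirmations stop, the count is frozen, but the test for the frozen count passes later
  have hconst : ∀ u ≥ U, confirmCount T u = confirmCount T U := by
    intro u hu
    induction u, hu using Nat.le_induction with
    | base => rfl
    | succ u hu ih => simp [confirmCount_succ, hU u hu, ih]
  obtain ⟨u, hTu, hu⟩ := ((h (confirmCount T U)).and (eventually_ge_atTop U)).exists
  exact hU u hu (show T u (confirmCount T u) = true by rwa [hconst u hu])

theorem tendsto_confirmCount (h : ∃ᶠ u in atTop, confirms T u) :
    Tendsto (confirmCount T) atTop atTop := by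
  refine tendsto_atTop_atTop_of_monotone confirmCount_mono fun n => ?_
  induction n with
  | zero => exact ⟨0, le_rfl⟩
  | succ n ih =>
    obtain ⟨u, hu⟩ := ih
    obtain ⟨w, huw, hw⟩ := frequently_atTop.mp h u
    refine ⟨w + 1, ?_⟩
    have := confirmCount_mono (T := T) huw
    rw [confirmCount_succ, if_pos hw]
    omega

theorem frequently_of_frequently_confirms (hT : ∀ u, Antitone (T u))
    (h : ∃ᶠ u in atTop, confirms T u) (n : ℕ) : ∃ᶠ u in atTop, T u n :=
  (h.and_eventually ((tendsto_confirmCount h).eventually_ge_atTop n)).mono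
    fun u ⟨hc, hn⟩ => Bool.le_iff_imp.mp (hT u hn) hc

end Confirmation

section Primrec

open Primrec

theorem Primrec.leftEnd {P : ℕ → ℕ → Bool} (hP : Primrec₂ P) :
    Primrec₂ fun c u => leftEnd (P c) u := by
  have hstep : Primrec₂ fun (c : ℕ) (q : ℕ × ℕ) => if P c q.1 then 2 * q.1 + 1 else q.2 :=
    Primrec.ite (Primrec.eq.comp (hP.comp fst (fst.comp snd)) (const true))
      (nat_add.comp (nat_mul.comp (const 2) (fst.comp snd)) (const 1)) (snd.comp snd)
  refine (Primrec.nat_rec (const 0) hstep).of_eq fun c u => ?_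
  induction u with
  | zero => rfl
  | succ u ih => simp [_root_.leftEnd, ih]

theorem Primrec.chainSucc {P : ℕ → ℕ → Bool} (hP : Primrec₂ P) :
    Primrec₂ fun c j => chainSucc (P c) j := by
  have hhalf : Primrec fun q : ℕ × ℕ => q.2 / 2 := nat_div.comp snd (const 2)
  have hPq : PrimrecPred fun q : ℕ × ℕ => P q.1 (q.2 / 2) = true :=
    Primrec.eq.comp (hP.comp fst hhalf) (const true)
  exact Primrec.ite (Primrec.eq.comp (nat_mod.comp snd (const 2)) (const 0))
    (Primrec.ite hPq (nat_add.comp snd (const 2)) (nat_add.comp snd (const 1)))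
    (Primrec.ite hPq ((Primrec.leftEnd hP).comp fst hhalf) (nat_add.comp snd (const 1)))

theorem Primrec.columnMap {s : ℕ → ℕ → ℕ} (hs : Primrec₂ s) : Primrec (columnMap s) :=
  Primrec₂.natPair.comp (fst.comp unpair) (hs.comp (fst.comp unpair) (snd.comp unpair))

theorem Primrec.confirms {T : ℕ → ℕ → ℕ → Bool}
    (hT : Primrec fun q : ℕ × ℕ × ℕ => T q.1 q.2.1 q.2.2) :
    Primrec₂ fun c u => confirms (T c) u := by
  have hstep : Primrec₂ fun (c : ℕ) (q : ℕ × ℕ) => q.2 + if T c q.1 q.2 then 1 else 0 :=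
    nat_add.comp (snd.comp snd) (Primrec.ite
      (Primrec.eq.comp (hT.comp (fst.pair ((fst.comp snd).pair (snd.comp snd)))) (const true))
      (const 1) (const 0))
  have hcount : Primrec₂ fun c u => confirmCount (T c) u := by
    refine (Primrec.nat_rec (const 0) hstep).of_eq fun c u => ?_
    induction u with
    | zero => rfl
    | succ u ih => simp [confirmCount, ih]
  exact hT.comp (fst.pair (snd.pair hcount))

end Primrec

section StructureA

def injA : ℕ → ℕ := columnMap fun c => chainSucc fun _ => c % 2 == 0

theorem surjective_chainSucc_parity_iff (c : ℕ) :
    Surjective (chainSucc fun _ => c % 2 == 0) ↔ c % 2 = 0 := by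
  simp [surjective_chainSucc_iff]

theorem primrec_injA : Primrec injA :=
  Primrec.columnMap <| Primrec.chainSucc <|
    Primrec.beq.comp (Primrec.nat_mod.comp Primrec.fst (Primrec.const 2)) (Primrec.const 0)

theorem injA_injective : Injective injA :=
  columnMap_injective fun _ => chainSucc_injective

theorem orbit_injA_infinite (n : ℕ) : (Orbit injA n).Infinite := by
  obtain ⟨c, j, rfl⟩ := exists_eq_pair n
  exact orbit_columnMap_infinite (fun _ _ => chainSucc_connected _ _) j

theorem isZetaChain_injA_iff (n : ℕ) : IsZetaChain injA n ↔ n.unpair.1 % 2 = 0 := by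
  obtain ⟨c, j, rfl⟩ := exists_eq_pair n
  rw [injA, isZetaChain_columnMap_iff (fun _ _ => chainSucc_connected _ _),
    surjective_chainSucc_parity_iff, Nat.unpair_pair]

theorem infinite_setOf_omegaChain_injA :
    {O : Set ℕ | ∃ n : ℕ, O = Orbit injA n ∧ IsOmegaChain injA n}.Infinite := by
  refine infinite_setOf_orbit_columnMap (fun _ => chainSucc_connected)
    (Set.infinite_range_of_injective (f := fun i => 2 * i + 1) fun a b h => by simp_all) ?_
  rintro _ ⟨i, rfl⟩
  dsimp only
  rw [injA, isOmegaChain_columnMap_iff (fun _ _ => chainSucc_connected _ _),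
    surjective_chainSucc_parity_iff]
  omega

theorem infinite_setOf_zetaChain_injA :
    {O : Set ℕ | ∃ n : ℕ, O = Orbit injA n ∧ IsZetaChain injA n}.Infinite := by
  refine infinite_setOf_orbit_columnMap (fun _ => chainSucc_connected)
    (Set.infinite_range_of_injective (f := fun i => 2 * i) fun a b h => by simp_all) ?_
  rintro _ ⟨i, rfl⟩
  dsimp only
  rw [isZetaChain_injA_iff, Nat.unpair_pair]
  omega

end StructureA

section StructureB

open Primrec Filter

variable (gs : ℕ → ℕ → ℕ → ℕ)

/-- The test of column `⟨x, ⟨s, k⟩⟩` at stage `u` after `n` confirmations. -/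
def limitTest (c u n : ℕ) : Bool :=
  decide (∀ i < n, gs c.unpair.1 (c.unpair.2.unpair.1 + i) u = c.unpair.2.unpair.2)

def injB : ℕ → ℕ := columnMap fun c => chainSucc (confirms (limitTest gs c))

theorem limitTest_antitone (c u : ℕ) : Antitone (limitTest gs c u) := by
  intro n n' hnn'
  simp only [limitTest, Bool.le_iff_imp, decide_eq_true_eq]
  exact fun h i hi => h i (hi.trans_le hnn')


variable {gs}

theorem primrec_injB (hgs : Primrec fun p : ℕ × ℕ × ℕ => gs p.1 p.2.1 p.2.2) :
    Primrec (injB gs) := by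
  have hR : PrimrecRel fun (i : ℕ) (q : ℕ × ℕ) =>
      gs q.1.unpair.1 (q.1.unpair.2.unpair.1 + i) q.2 = q.1.unpair.2.unpair.2 :=
    Primrec.eq.comp (hgs.comp ((fst.comp (unpair.comp (fst.comp snd))).pair
        ((nat_add.comp (fst.comp (unpair.comp (snd.comp (unpair.comp (fst.comp snd))))) fst).pair
          (snd.comp snd))))
      (snd.comp (unpair.comp (snd.comp (unpair.comp (fst.comp snd)))))
  have htest : Primrec fun q : ℕ × ℕ × ℕ => limitTest gs q.1 q.2.1 q.2.2 :=
    (hR.forall_mem_list.comp (list_range.comp (snd.comp snd)) (fst.pair (fst.comp snd))).decide.of_eq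
      fun q => by simp [limitTest]
  exact Primrec.columnMap (Primrec.chainSucc (Primrec.confirms (T := limitTest gs) htest))

theorem injB_injective : Injective (injB gs) :=
  columnMap_injective fun _ => chainSucc_injective

variable {g : ℕ → ℕ} {L : ℕ → ℕ → ℕ}

theorem surjective_injB_column_iff (hL : ∀ x s : ℕ, ∃ t₀ : ℕ, ∀ t ≥ t₀, gs x s t = L x s)
    (x s k : ℕ) :
    Surjective (chainSucc (confirms (limitTest gs (Nat.pair x (Nat.pair s k))))) ↔
      ∀ i, L x (s + i) = k := by
  have hsettle : ∀ i, ∀ᶠ u in atTop, gs x (s + i) u = L x (s + i) :=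
    fun i => eventually_atTop.mpr (hL x (s + i))
  rw [surjective_chainSucc_iff]
  constructor
  · intro h i
    obtain ⟨u, htest, hu⟩ :=
      ((frequently_of_frequently_confirms (limitTest_antitone gs _) h (i + 1)).and_eventually
        (hsettle i)).exists
    simp only [limitTest, Nat.unpair_pair, decide_eq_true_eq] at htest
    rw [← hu, htest i (Nat.lt_succ_self i)]
  · intro h
    refine frequently_confirms fun n => ?_
    filter_upwards [(eventually_all_finite (Set.finite_Iio n)).mpr fun i _ => hsettle i] with u hu
    simpa [limitTest, h] using hu


theorem isZetaChain_injB_iff (hL : ∀ x s : ℕ, ∃ t₀ : ℕ, ∀ t ≥ t₀, gs x s t = L x s)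
    (x s k : ℕ) :
    IsZetaChain (injB gs) (Nat.pair (Nat.pair x (Nat.pair s k)) 0) ↔ ∀ i, L x (s + i) = k := by
  rw [injB, isZetaChain_columnMap_iff (fun _ _ => chainSucc_connected _ _),
    surjective_injB_column_iff hL]

theorem eq_of_forall_limit_eq (hlim : ∀ x : ℕ, ∃ s₀ : ℕ, ∀ s ≥ s₀, L x s = g x) {x s k : ℕ}
    (h : ∀ i, L x (s + i) = k) : k = g x := by
  obtain ⟨s₀, hs₀⟩ := hlim x
  rw [← h s₀, hs₀ _ (Nat.le_add_left s₀ s)]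

theorem exists_isInjIso_injA_injB (hL : ∀ x s : ℕ, ∃ t₀ : ℕ, ∀ t ≥ t₀, gs x s t = L x s)
    (hlim : ∀ x : ℕ, ∃ s₀ : ℕ, ∀ s ≥ s₀, L x s = g x) : ∃ h, IsInjIso injA (injB gs) h := by
  have hB (x s k : ℕ) := surjective_injB_column_iff hL x s k
  obtain ⟨s₀, hs₀⟩ := hlim 0
  refine exists_isInjIso_columnMap (fun _ => chainSucc_injective) (fun _ => chainSucc_connected)
    (fun _ => chainSucc_injective) (fun _ => chainSucc_connected) ?_ ?_ ?_ ?_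
  · refine (Set.infinite_range_of_injective (f := fun i => 2 * i) fun a b h => by simp_all).mono ?_
    rintro _ ⟨i, rfl⟩
    simp [surjective_chainSucc_parity_iff]
  · refine (Set.infinite_range_of_injective (f := fun i => 2 * i + 1)
      fun a b h => by simp_all).mono ?_
    rintro _ ⟨i, rfl⟩
    simp [surjective_chainSucc_parity_iff]
  · refine (Set.infinite_range_of_injective (f := fun s => Nat.pair 0 (Nat.pair (s₀ + s) (g 0)))
      fun a b h => by simp_all).mono ?_
    rintro _ ⟨s, rfl⟩
    exact (hB 0 (s₀ + s) (g 0)).mpr fun i => hs₀ _ (by omega)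
  · refine (Set.infinite_range_of_injective (f := fun s => Nat.pair 0 (Nat.pair s (g 0 + 1)))
      fun a b h => by simp_all).mono ?_
    rintro _ ⟨s, rfl⟩
    intro hsurj
    have := eq_of_forall_limit_eq hlim ((hB 0 s (g 0 + 1)).mp hsurj)
    omega

end StructureB
namespace RecursiveIn'

variable {o : ℕ →. ℕ}

theorem of_partrec {f : ℕ →. ℕ} (hf : Nat.Partrec f) : RecursiveIn' o f := by
  induction hf with
  | zero => exact .zero
  | succ => exact .succ
  | left => exact .left
  | right => exact .right
  | pair _ _ ih₁ ih₂ => exact .pair ih₁ ih₂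
  | comp _ _ ih₁ ih₂ => exact .comp ih₁ ih₂
  | prec _ _ ih₁ ih₂ => exact .prec ih₁ ih₂
  | rfind _ ih => exact .rfind ih

theorem of_primrec {f : ℕ → ℕ} (hf : Primrec f) : RecursiveIn' o f :=
  of_partrec (Partrec.nat_iff.mp hf.to_comp.partrec)

theorem comp_total {f g : ℕ → ℕ} (hg : RecursiveIn' o g) (hf : RecursiveIn' o f) :
    RecursiveIn' o ↑(g ∘ f) := by
  have hcomp : (fun n => (f : ℕ →. ℕ) n >>= (g : ℕ →. ℕ)) = ((g ∘ f : ℕ → ℕ) : ℕ →. ℕ) :=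
    funext fun n => Part.bind_some _ _
  exact hcomp ▸ RecursiveIn'.comp hg hf

theorem nat_find {q : ℕ → ℕ} (hq : RecursiveIn' o q) (h : ∀ x, ∃ m, q (Nat.pair x m) = 0) :
    RecursiveIn' o ↑fun x => Nat.find (h x) := by
  have hfind : (fun a => Nat.rfind fun n => (fun m => m = 0) <$> (q : ℕ →. ℕ) (Nat.pair a n)) =
      ((fun x => Nat.find (h x) : ℕ → ℕ) : ℕ →. ℕ) := by
    funext x
    refine Part.eq_some_iff.mpr (Nat.mem_rfind.mpr ⟨?_, fun hk => ?_⟩)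
    · simpa [PFun.coe_val] using Nat.find_spec (h x)
    · simpa [PFun.coe_val] using Nat.find_min (h x) hk
  exact hfind ▸ RecursiveIn'.rfind hq

end RecursiveIn'

theorem turingReducible_of_isInjIso {g : ℕ → ℕ} {gs : ℕ → ℕ → ℕ → ℕ} {L : ℕ → ℕ → ℕ}
    (hL : ∀ x s : ℕ, ∃ t₀ : ℕ, ∀ t ≥ t₀, gs x s t = L x s)
    (hlim : ∀ x : ℕ, ∃ s₀ : ℕ, ∀ s ≥ s₀, L x s = g x) {h hinv : ℕ → ℕ}
    (hh : IsInjIso injA (injB gs) h) (hinv_right : RightInverse hinv h) :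
    TuringReducible' ↑g ↑(join h hinv) := by
  -- `q c` is the parity of the `injA`-column of `hinv ⟨c, 0⟩`
  set q : ℕ → ℕ := (fun n => n.unpair.1 % 2) ∘ join h hinv ∘ fun c => 2 * Nat.pair c 0 + 1
  have hq : RecursiveIn' (↑(join h hinv)) ↑q :=
    (RecursiveIn'.of_primrec (Primrec.nat_mod.comp (Primrec.fst.comp Primrec.unpair)
      (Primrec.const 2))).comp_total <| RecursiveIn'.oracle.comp_total <| .of_primrec <|
      Primrec.nat_add.comp (Primrec.nat_mul.comp (Primrec.const 2)
        (Primrec₂.natPair.comp Primrec.id (Primrec.const 0))) (Primrec.const 1)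
  have hq_eq : ∀ x s k, q (Nat.pair x (Nat.pair s k)) = 0 ↔ ∀ i, L x (s + i) = k := by
    intro x s k
    have hjoin : join h hinv (2 * Nat.pair (Nat.pair x (Nat.pair s k)) 0 + 1) =
        hinv (Nat.pair (Nat.pair x (Nat.pair s k)) 0) := by
      simp [join, Nat.add_mod, Nat.add_div]
    rw [← isZetaChain_injB_iff hL, ← hinv_right (Nat.pair _ 0), hh.isZetaChain_iff,
      isZetaChain_injA_iff]
    simp [q, hjoin]
  have hex : ∀ x, ∃ m, q (Nat.pair x m) = 0 := fun x => by
    obtain ⟨s₀, hs₀⟩ := hlim x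
    exact ⟨Nat.pair s₀ (g x), (hq_eq x s₀ (g x)).mpr fun i => hs₀ _ (Nat.le_add_right s₀ i)⟩
  have hg : g = (fun m : ℕ => m.unpair.2) ∘ fun x => Nat.find (hex x) := by
    funext x
    have hfound := Nat.find_spec (hex x)
    rw [← Nat.pair_unpair (Nat.find (hex x)), hq_eq] at hfound
    exact (eq_of_forall_limit_eq hlim hfound).symm
  rw [TuringReducible', hg]
  exact (RecursiveIn'.of_primrec (Primrec.snd.comp Primrec.unpair)).comp_total
    (RecursiveIn'.nat_find hq hex)

theorem prcat_delta3_injection (g : ℕ → ℕ) (gs : ℕ → ℕ → ℕ → ℕ) (L : ℕ → ℕ → ℕ)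
    (hgs : Primrec fun p : ℕ × ℕ × ℕ => gs p.1 p.2.1 p.2.2)
    (hL : ∀ x s : ℕ, ∃ t₀ : ℕ, ∀ t ≥ t₀, gs x s t = L x s)
    (hlim : ∀ x : ℕ, ∃ s₀ : ℕ, ∀ s ≥ s₀, L x s = g x) :
    ∃ fA fB : ℕ → ℕ,
      Primrec fA ∧ Primrec fB ∧ Function.Injective fA ∧ Function.Injective fB ∧
      (∀ n : ℕ, (Orbit fA n).Infinite) ∧
      {O : Set ℕ | ∃ n : ℕ, O = Orbit fA n ∧ IsOmegaChain fA n}.Infinite ∧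
      {O : Set ℕ | ∃ n : ℕ, O = Orbit fA n ∧ IsZetaChain fA n}.Infinite ∧
      (∃ h : ℕ → ℕ, IsInjIso fA fB h) ∧
      (∀ h hinv : ℕ → ℕ, IsInjIso fA fB h →
        Function.LeftInverse hinv h → Function.RightInverse hinv h →
        TuringReducible' ↑g ↑(join h hinv)) :=
  ⟨injA, injB gs, primrec_injA, primrec_injB hgs, injA_injective, injB_injective,
    orbit_injA_infinite, infinite_setOf_omegaChain_injA, infinite_setOf_zetaChain_injA,
    exists_isInjIso_injA_injB hL hlim,
    fun _ _ hh _ hinv_right => turingReducible_of_isInjIso hL hlim hh hinv_right⟩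
end

section
/- There exists an injective primitive recursive function f : ℕ → ℕ such that: every orbit of f is finite; for every n : ℕ only finitely many orbits of f have cardinality n; f is computably categorical, i.e., for every injective computable function g : ℕ → ℕ such that (ℕ, g) is isomorphic to (ℕ, f), there exists a computable bijection h : ℕ → ℕ with h ∘ f = g ∘ h; and f is not punctually categorical, i.e., there exists an injective primitive recursive function g : ℕ → ℕ with (ℕ, g) isomorphic to (ℕ, f) such that there is no bijection h : ℕ → ℕ with h ∘ f = g ∘ h for which both h and h⁻¹ are primitive recursive. -/
/-!
The structure consists of one cycle of each length `k + 1`, laid out as consecutive blocks of `ℕ`.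
It is computably categorical: in a computable copy `g`, a point of `g`-period `k + 1` can be found
by unbounded search, and mapping the block of length `k + 1` onto its `g`-orbit is a computable
isomorphism. It is not punctually categorical: take a primitive recursive permutation `σ` of `ℕ`
whose inverse is not dominated by any primitive recursive function (`σ⁻¹ (2 * k)` encodes the
halting time of a computation of `ack k k`, which its output bounds from below) and list the same
cycles in the order given by `σ`. Any isomorphism onto this copy sends the start of block `j`
beyond `σ⁻¹ j`, so it is not primitive recursive.
-/

open Function

theorem Function.Semiconj.minimalPeriod_apply {α β : Type*} {e : α → β} {f : α → α}
    {g : β → β} (h : Semiconj e f g) (he : Injective e) (x : α) :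
    minimalPeriod g (e x) = minimalPeriod f x :=
  minimalPeriod_eq_minimalPeriod_iff.2 fun n => by
    rw [IsPeriodicPt, IsFixedPt, ← h.iterate_right n x, he.eq_iff]
    rfl

section Computability

variable {α : Type*} [Primcodable α]

theorem computable₂_iterate {g : α → α} (hg : Computable g) :
    Computable₂ fun (n : ℕ) (x : α) => g^[n] x := by
  refine (Computable.nat_rec Computable.fst Computable.snd
    (hg.comp (Computable.snd.comp Computable.snd)).to₂).of_eq fun (n, x) => ?_
  induction n with
  | zero => rfl
  | succ n ih => exact (congrArg g ih).trans (iterate_succ_apply' g n x).symm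

theorem computable_of_isLeast {p : α → ℕ → Prop} [∀ a n, Decidable (p a n)]
    (hp : Computable₂ fun a n => decide (p a n)) {F : α → ℕ}
    (hF : ∀ a, p a (F a) ∧ ∀ m < F a, ¬p a m) : Computable F :=
  (Partrec.rfind hp.partrec₂).of_eq_tot fun a =>
    Nat.mem_rfind.2 ⟨Part.mem_some_iff.2 (decide_eq_true (hF a).1).symm,
      fun hm => Part.mem_some_iff.2 (decide_eq_false ((hF a).2 _ hm)).symm⟩

theorem computable_minimalPeriod [DecidableEq α] {g : α → α} (hg : Computable g)
    (hper : ∀ x, x ∈ periodicPts g) : Computable (minimalPeriod g) := by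
  have hpos (x : α) : 0 < minimalPeriod g x := minimalPeriod_pos_of_mem_periodicPts (hper x)
  have hpred : Computable (fun x => minimalPeriod g x - 1) := by
    refine computable_of_isLeast (p := fun x n => g^[n + 1] x = x) ?_
      fun x => ⟨?_, fun m hm => ?_⟩
    · exact Primrec.eq.decide.to_comp.comp
        ((computable₂_iterate hg).comp (Computable.succ.comp Computable.snd) Computable.fst)
        Computable.fst
    · rw [Nat.sub_add_cancel (hpos x)]
      exact isPeriodicPt_minimalPeriod g x
    · exact not_isPeriodicPt_of_pos_of_lt_minimalPeriod m.succ_ne_zero (by omega)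
  exact (Computable.succ.comp hpred).of_eq fun x => Nat.sub_add_cancel (hpos x)

end Computability

namespace InjectionStructure

section Blocks

variable (d : ℕ → ℕ)

/-- Block `j` is `[blockStart d j, blockStart d (j + 1))`; it has `d j + 1` elements, so no block
is empty, and `blockCycle d` cycles each block. -/
def blockStart : ℕ → ℕ
  | 0 => 0
  | j + 1 => blockStart j + (d j + 1)

def blockIndex (x : ℕ) : ℕ := Nat.findGreatest (fun j => blockStart d j ≤ x) x

def blockOffset (x : ℕ) : ℕ := x - blockStart d (blockIndex d x)

def blockCycle (x : ℕ) : ℕ :=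
  blockStart d (blockIndex d x) + (blockOffset d x + 1) % (d (blockIndex d x) + 1)

variable {d}

theorem blockStart_succ (j : ℕ) : blockStart d (j + 1) = blockStart d j + (d j + 1) := rfl

theorem le_blockStart (j : ℕ) : j ≤ blockStart d j := by
  induction j with
  | zero => exact le_rfl
  | succ j ih => rw [blockStart_succ]; omega

theorem blockStart_strictMono : StrictMono (blockStart d) :=
  strictMono_nat_of_lt_succ fun j => by rw [blockStart_succ]; omega

theorem blockStart_blockIndex_le (x : ℕ) : blockStart d (blockIndex d x) ≤ x :=
  Nat.findGreatest_spec (P := fun j => blockStart d j ≤ x) (Nat.zero_le x) (Nat.zero_le x)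

theorem lt_blockStart_blockIndex_succ (x : ℕ) : x < blockStart d (blockIndex d x + 1) := by
  by_cases hx : blockIndex d x + 1 ≤ x
  · exact lt_of_not_ge
      (Nat.findGreatest_is_greatest (P := fun j => blockStart d j ≤ x) (Nat.lt_succ_self _) hx)
  · exact lt_of_lt_of_le (by omega) (le_blockStart _)

theorem blockIndex_eq_iff {x j : ℕ} :
    blockIndex d x = j ↔ blockStart d j ≤ x ∧ x < blockStart d (j + 1) := by
  refine ⟨fun h => h ▸ ⟨blockStart_blockIndex_le x, lt_blockStart_blockIndex_succ x⟩, ?_⟩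
  rintro ⟨hjx, hxj⟩
  have h1 := blockStart_blockIndex_le (d := d) x
  have h2 := lt_blockStart_blockIndex_succ (d := d) x
  have := blockStart_strictMono (d := d)
  refine le_antisymm ?_ ?_
  · exact Nat.lt_succ_iff.1 (this.lt_iff_lt.1 (h1.trans_lt hxj))
  · exact Nat.lt_succ_iff.1 (this.lt_iff_lt.1 (hjx.trans_lt h2))

theorem blockIndex_blockStart_add {j r : ℕ} (hr : r ≤ d j) :
    blockIndex d (blockStart d j + r) = j :=
  blockIndex_eq_iff.2 ⟨by omega, by rw [blockStart_succ]; omega⟩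

theorem blockIndex_blockStart (j : ℕ) : blockIndex d (blockStart d j) = j :=
  blockIndex_blockStart_add (Nat.zero_le _)

theorem blockOffset_blockStart_add {j r : ℕ} (hr : r ≤ d j) :
    blockOffset d (blockStart d j + r) = r := by
  rw [blockOffset, blockIndex_blockStart_add hr]; omega

theorem blockStart_add_blockOffset (x : ℕ) :
    blockStart d (blockIndex d x) + blockOffset d x = x := by
  have := blockStart_blockIndex_le (d := d) x
  rw [blockOffset]; omega

theorem blockOffset_le (x : ℕ) : blockOffset d x ≤ d (blockIndex d x) := by
  have := lt_blockStart_blockIndex_succ (d := d) x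
  rw [blockStart_succ] at this
  rw [blockOffset]; omega

theorem blockIndex_le (x : ℕ) : blockIndex d x ≤ x :=
  (le_blockStart _).trans (blockStart_blockIndex_le x)

theorem blockCycle_blockStart_add {j r : ℕ} (hr : r ≤ d j) :
    blockCycle d (blockStart d j + r) = blockStart d j + (r + 1) % (d j + 1) := by
  rw [blockCycle, blockIndex_blockStart_add hr, blockOffset_blockStart_add hr]

theorem iterate_blockCycle_blockStart_add {j r : ℕ} (hr : r ≤ d j) (m : ℕ) :
    (blockCycle d)^[m] (blockStart d j + r) = blockStart d j + (r + m) % (d j + 1) := by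
  induction m with
  | zero => rw [iterate_zero_apply, Nat.add_zero, Nat.mod_eq_of_lt (by omega)]
  | succ m ih =>
    rw [iterate_succ_apply', ih,
      blockCycle_blockStart_add (Nat.lt_succ_iff.1 (Nat.mod_lt _ (by omega))),
      Nat.mod_add_mod, Nat.add_assoc]

theorem iterate_blockCycle_blockStart (x : ℕ) :
    (blockCycle d)^[blockOffset d x] (blockStart d (blockIndex d x)) = x := by
  have h := iterate_blockCycle_blockStart_add (Nat.zero_le (d (blockIndex d x))) (blockOffset d x)
  rwa [Nat.add_zero, Nat.zero_add, Nat.mod_eq_of_lt (Nat.lt_succ_of_le (blockOffset_le x)),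
    blockStart_add_blockOffset] at h

theorem exists_blockStart_add_eq (x : ℕ) : ∃ j r, r ≤ d j ∧ blockStart d j + r = x :=
  ⟨_, _, blockOffset_le x, blockStart_add_blockOffset x⟩

theorem blockIndex_iterate_blockCycle (m x : ℕ) :
    blockIndex d ((blockCycle d)^[m] x) = blockIndex d x := by
  obtain ⟨j, r, hr, rfl⟩ := exists_blockStart_add_eq (d := d) x
  rw [iterate_blockCycle_blockStart_add hr,
    blockIndex_blockStart_add (Nat.lt_succ_iff.1 (Nat.mod_lt _ (Nat.succ_pos _))),
    blockIndex_blockStart_add hr]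

theorem blockIndex_blockCycle (x : ℕ) : blockIndex d (blockCycle d x) = blockIndex d x :=
  blockIndex_iterate_blockCycle 1 x

theorem isPeriodicPt_blockCycle_iff {n x : ℕ} :
    IsPeriodicPt (blockCycle d) n x ↔ d (blockIndex d x) + 1 ∣ n := by
  obtain ⟨j, r, hr, rfl⟩ := exists_blockStart_add_eq (d := d) x
  rw [blockIndex_blockStart_add hr, IsPeriodicPt, IsFixedPt, iterate_blockCycle_blockStart_add hr,
    Nat.add_left_cancel_iff, ← Nat.modEq_zero_iff_dvd]
  calc (r + n) % (d j + 1) = r ↔ r + n ≡ r + 0 [MOD d j + 1] := by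
        simp only [Nat.ModEq, Nat.add_zero, Nat.mod_eq_of_lt (show r < d j + 1 by omega)]
    _ ↔ n ≡ 0 [MOD d j + 1] := ⟨Nat.ModEq.add_left_cancel' r, Nat.ModEq.add_left r⟩

theorem minimalPeriod_blockCycle (x : ℕ) :
    minimalPeriod (blockCycle d) x = d (blockIndex d x) + 1 :=
  Nat.dvd_right_iff_eq.1 fun _ => by
    rw [← isPeriodicPt_iff_minimalPeriod_dvd, isPeriodicPt_blockCycle_iff]

theorem blockCycle_injective : Injective (blockCycle d) := by
  refine LeftInverse.injective (g := fun y => (blockCycle d)^[d (blockIndex d y)] y) fun x => ?_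
  dsimp only
  rw [blockIndex_blockCycle, ← iterate_succ_apply]
  exact isPeriodicPt_blockCycle_iff.2 dvd_rfl

theorem mem_orbit_blockCycle_iff {a b : ℕ} :
    b ∈ Orbit (blockCycle d) a ↔ blockIndex d b = blockIndex d a := by
  constructor
  · rintro ⟨m, n, h⟩
    rw [← blockIndex_iterate_blockCycle n b, ← h, blockIndex_iterate_blockCycle]
  · intro h
    refine ⟨blockOffset d b, blockOffset d a, ?_⟩
    conv_lhs => rw [← iterate_blockCycle_blockStart (d := d) a]
    conv_rhs => rw [← iterate_blockCycle_blockStart (d := d) b, h]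
    rw [← iterate_add_apply, ← iterate_add_apply, Nat.add_comm]

theorem orbit_blockCycle (a : ℕ) :
    Orbit (blockCycle d) a =
      Set.Ico (blockStart d (blockIndex d a)) (blockStart d (blockIndex d a + 1)) := by
  ext b
  rw [mem_orbit_blockCycle_iff, blockIndex_eq_iff, Set.mem_Ico]

theorem orbit_blockCycle_finite (a : ℕ) : (Orbit (blockCycle d) a).Finite := by
  rw [orbit_blockCycle]
  exact Set.finite_Ico _ _

theorem ncard_orbit_blockCycle (a : ℕ) :
    (Orbit (blockCycle d) a).ncard = d (blockIndex d a) + 1 := by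
  rw [orbit_blockCycle, ← Finset.coe_Ico, Set.ncard_coe_finset, Nat.card_Ico, blockStart_succ]
  omega

theorem setOf_orbit_blockCycle_ncard_subsingleton (hinj : Injective d) (n : ℕ) :
    {O : Set ℕ | (∃ a : ℕ, O = Orbit (blockCycle d) a) ∧ O.ncard = n}.Subsingleton := by
  rintro _ ⟨⟨a, rfl⟩, ha⟩ _ ⟨⟨b, rfl⟩, hb⟩
  rw [ncard_orbit_blockCycle] at ha hb
  rw [orbit_blockCycle, orbit_blockCycle, hinj (Nat.succ_injective (ha.trans hb.symm))]

theorem primrec_blockStart (hd : Primrec d) : Primrec (blockStart d) := by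
  refine (Primrec.nat_rec₁ 0 (f := fun j s => s + (d j + 1))
      (Primrec.nat_add.comp Primrec.snd (Primrec.succ.comp (hd.comp Primrec.fst)))).of_eq
    fun j => ?_
  induction j with
  | zero => rfl
  | succ j ih => rw [blockStart_succ, ← ih]

theorem primrec_blockIndex (hd : Primrec d) : Primrec (blockIndex d) :=
  Primrec.nat_findGreatest Primrec.id
    (Primrec.nat_le.comp ((primrec_blockStart hd).comp Primrec.snd) Primrec.fst)

theorem primrec_blockOffset (hd : Primrec d) : Primrec (blockOffset d) :=
  Primrec.nat_sub.comp Primrec.id ((primrec_blockStart hd).comp (primrec_blockIndex hd))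

theorem primrec_blockCycle (hd : Primrec d) : Primrec (blockCycle d) :=
  Primrec.nat_add.comp ((primrec_blockStart hd).comp (primrec_blockIndex hd))
    (Primrec.nat_mod.comp (Primrec.succ.comp (primrec_blockOffset hd))
      (Primrec.succ.comp (hd.comp (primrec_blockIndex hd))))

def blockRelabel (d d' τ : ℕ → ℕ) (x : ℕ) : ℕ :=
  blockStart d' (τ (blockIndex d x)) + blockOffset d x

variable {d' : ℕ → ℕ}

theorem blockRelabel_blockStart_add {τ : ℕ → ℕ} {j r : ℕ} (hr : r ≤ d j) :
    blockRelabel d d' τ (blockStart d j + r) = blockStart d' (τ j) + r := by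
  rw [blockRelabel, blockIndex_blockStart_add hr, blockOffset_blockStart_add hr]

theorem leftInverse_blockRelabel {τ : ℕ ≃ ℕ} (hτ : ∀ j, d' (τ j) = d j) :
    LeftInverse (blockRelabel d' d τ.symm) (blockRelabel d d' τ) := fun x => by
  obtain ⟨j, r, hr, rfl⟩ := exists_blockStart_add_eq (d := d) x
  rw [blockRelabel_blockStart_add hr, blockRelabel_blockStart_add (by rwa [hτ]),
    Equiv.symm_apply_apply]

theorem semiconj_blockRelabel {τ : ℕ → ℕ} (hτ : ∀ j, d' (τ j) = d j) :
    Semiconj (blockRelabel d d' τ) (blockCycle d) (blockCycle d') := fun x => by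
  obtain ⟨j, r, hr, rfl⟩ := exists_blockStart_add_eq (d := d) x
  rw [blockCycle_blockStart_add hr,
    blockRelabel_blockStart_add (Nat.lt_succ_iff.1 (Nat.mod_lt _ (Nat.succ_pos _))),
    blockRelabel_blockStart_add hr, blockCycle_blockStart_add (by rwa [hτ]), hτ]

theorem exists_bijective_semiconj_blockCycle (τ : ℕ ≃ ℕ) (hτ : ∀ j, d' (τ j) = d j) :
    ∃ h : ℕ → ℕ, Bijective h ∧ ∀ n, h (blockCycle d n) = blockCycle d' (h n) :=
  have hτ' : ∀ j, d (τ.symm j) = d' j := fun j => by rw [← hτ, Equiv.apply_symm_apply]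
  ⟨blockRelabel d d' τ, ⟨(leftInverse_blockRelabel hτ).injective,
    (leftInverse_blockRelabel (τ := τ.symm) hτ').rightInverse.surjective⟩,
    semiconj_blockRelabel hτ⟩

def blockRotate (d s : ℕ → ℕ) (x : ℕ) : ℕ := (blockCycle d)^[s (blockIndex d x)] x

theorem semiconj_blockRotate (s : ℕ → ℕ) :
    Semiconj (blockRotate d s) (blockCycle d) (blockCycle d) := fun x => by
  rw [blockRotate, blockRotate, blockIndex_blockCycle, ← iterate_succ_apply, iterate_succ_apply']

theorem bijective_blockRotate (s : ℕ → ℕ) : Bijective (blockRotate d s) := by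
  set u : ℕ → ℕ := fun y => (blockCycle d)^[d (blockIndex d y) * s (blockIndex d y)] y
  have hper (x : ℕ) : (blockCycle d)^[(d (blockIndex d x) + 1) * s (blockIndex d x)] x = x :=
    (isPeriodicPt_blockCycle_iff.2 dvd_rfl).mul_const _
  have hleft : LeftInverse u (blockRotate d s) := fun x => by
    simp only [u, blockRotate, blockIndex_iterate_blockCycle]
    rw [← iterate_add_apply, ← add_one_mul, hper]
  have hright : RightInverse u (blockRotate d s) := fun y => by
    simp only [u, blockRotate, blockIndex_iterate_blockCycle]
    rw [← iterate_add_apply, Nat.add_comm, ← add_one_mul, hper]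
  exact ⟨hleft.injective, hright.surjective⟩

theorem computablyCategorical_blockCycle (hd : Primrec d) (hinj : Injective d) {g : ℕ → ℕ}
    (hg : Computable g) {e : ℕ → ℕ} (he : Bijective e) (hcomm : Semiconj e (blockCycle d) g) :
    ∃ h : ℕ → ℕ, Computable h ∧ Bijective h ∧ ∀ n, h (blockCycle d n) = g (h n) := by
  have hperiod (x : ℕ) : minimalPeriod g (e x) = d (blockIndex d x) + 1 := by
    rw [hcomm.minimalPeriod_apply he.1, minimalPeriod_blockCycle]
  have hex (j : ℕ) : ∃ b, minimalPeriod g b = d j + 1 :=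
    ⟨e (blockStart d j), by rw [hperiod, blockIndex_blockStart]⟩
  set b : ℕ → ℕ := fun j => Nat.find (hex j)
  choose x hx using fun j => he.2 (b j)
  have hxj (j : ℕ) : blockIndex d (x j) = j := by
    have h1 := hperiod (x j)
    have h2 : minimalPeriod g (b j) = d j + 1 := Nat.find_spec (hex j)
    rw [hx] at h1
    exact hinj (by omega)
  set s : ℕ → ℕ := fun j => blockOffset d (x j)
  have hh : (fun y => g^[blockOffset d y] (b (blockIndex d y))) = e ∘ blockRotate d s := by
    funext y
    set j := blockIndex d y
    calc g^[blockOffset d y] (b j) = e ((blockCycle d)^[blockOffset d y] (x j)) := by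
          rw [← hx]; exact (hcomm.iterate_right _ _).symm
      _ = e ((blockCycle d)^[s j] ((blockCycle d)^[blockOffset d y] (blockStart d j))) := by
          conv_lhs => rw [← iterate_blockCycle_blockStart (d := d) (x j), hxj]
          rw [← iterate_add_apply, ← iterate_add_apply, Nat.add_comm]
      _ = (e ∘ blockRotate d s) y := by rw [iterate_blockCycle_blockStart]; rfl
  refine ⟨e ∘ blockRotate d s, ?_, he.comp (bijective_blockRotate s),
    hcomm.comp_left (semiconj_blockRotate s)⟩
  rw [← hh]
  have hmin : Computable (minimalPeriod g) :=
    computable_minimalPeriod hg fun y => by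
      obtain ⟨x, rfl⟩ := he.2 y
      exact minimalPeriod_pos_iff_mem_periodicPts.1 (by rw [hperiod]; omega)
  have hb : Computable b :=
    computable_of_isLeast (p := fun j y => minimalPeriod g y = d j + 1)
      (Primrec.eq.decide.to_comp.comp (hmin.comp Computable.snd)
        (Computable.succ.comp (hd.to_comp.comp Computable.fst)))
      fun j => ⟨Nat.find_spec (hex j), fun _ => Nat.find_min (hex j)⟩
  exact (computable₂_iterate hg).comp (primrec_blockOffset hd).to_comp
    (hb.comp (primrec_blockIndex hd).to_comp)

theorem symm_le_of_semiconj_blockCycle (hinj : Injective d) (σ : ℕ ≃ ℕ) {h : ℕ → ℕ}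
    (hh : Injective h) (hcomm : Semiconj h (blockCycle d) (blockCycle (d ∘ σ))) (j : ℕ) :
    σ.symm j ≤ h (blockStart d j) := by
  have hperiod := hcomm.minimalPeriod_apply hh (blockStart d j)
  rw [minimalPeriod_blockCycle, minimalPeriod_blockCycle, blockIndex_blockStart] at hperiod
  have hσ : σ (blockIndex (d ∘ σ) (h (blockStart d j))) = j :=
    hinj (Nat.succ_injective hperiod)
  rw [(Equiv.symm_apply_eq σ).2 hσ.symm]
  exact blockIndex_le _

end Blocks

section Threshold

variable {P : ℕ → ℕ → Prop} [DecidableRel P]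

def threshold (hex : ∀ k, ∃ y, P k y) (k : ℕ) : ℕ := Nat.find (hex k)

theorem threshold_le_iff (hmono : ∀ k, Monotone (P k)) (hex : ∀ k, ∃ y, P k y) {k y : ℕ} :
    threshold hex k ≤ y ↔ P k y :=
  ⟨fun h => hmono k h (Nat.find_spec (hex k)), Nat.find_min' (hex k)⟩

variable (P) in
/-- Column `k` of `ℕ × ℕ` loses its point at height `threshold k`, which goes to `2 * k`; the
rest of the column is moved down and sent, paired with `k`, to the odd numbers. -/
def collapse (k y : ℕ) : ℕ :=
  if ¬P k y then 2 * Nat.pair k y + 1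
  else if y = 0 ∨ ¬P k (y - 1) then 2 * k
  else 2 * Nat.pair k (y - 1) + 1

theorem collapse_eq (hmono : ∀ k, Monotone (P k)) (hex : ∀ k, ∃ y, P k y) (k y : ℕ) :
    collapse P k y =
      if y < threshold hex k then 2 * Nat.pair k y + 1
      else if y = threshold hex k then 2 * k
      else 2 * Nat.pair k (y - 1) + 1 := by
  simp only [collapse, ← threshold_le_iff hmono hex]
  split_ifs <;> omega

theorem primrec₂_collapse (hP : PrimrecRel P) : Primrec₂ (collapse P) :=
  Primrec.ite hP.not
    (Primrec.succ.comp (Primrec.nat_mul.comp (Primrec.const 2) Primrec₂.natPair))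
    (Primrec.ite
      (PrimrecPred.or (Primrec.eq.comp Primrec.snd (Primrec.const 0))
        (hP.comp Primrec.fst (Primrec.pred.comp Primrec.snd)).not)
      (Primrec.nat_mul.comp (Primrec.const 2) Primrec.fst)
      (Primrec.succ.comp (Primrec.nat_mul.comp (Primrec.const 2)
        (Primrec₂.natPair.comp Primrec.fst (Primrec.pred.comp Primrec.snd)))))

def thresholdEquiv (hmono : ∀ k, Monotone (P k)) (hex : ∀ k, ∃ y, P k y) : ℕ ≃ ℕ where
  toFun x := collapse P x.unpair.1 x.unpair.2
  invFun n :=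
    if n % 2 = 0 then Nat.pair (n / 2) (threshold hex (n / 2))
    else
      let k := (n / 2).unpair.1
      let z := (n / 2).unpair.2
      Nat.pair k (if z < threshold hex k then z else z + 1)
  left_inv x := by
    obtain ⟨⟨k, y⟩, rfl⟩ := Nat.pairEquiv.surjective x
    simp only [Nat.pairEquiv_apply, uncurry_apply_pair, Nat.unpair_pair, collapse_eq hmono hex]
    split_ifs <;> simp_all [Nat.mul_add_div] <;> omega
  right_inv n := by
    obtain ⟨m, rfl | rfl⟩ := Nat.even_or_odd' n
    · simp [collapse_eq hmono hex]
    · obtain ⟨⟨k, z⟩, rfl⟩ := Nat.pairEquiv.surjective m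
      rcases lt_or_ge z (threshold hex k) with h | h
      · simp [collapse_eq hmono hex, Nat.mul_add_div, h]
      · have h1 : ¬z + 1 < threshold hex k := by omega
        have h2 : z + 1 ≠ threshold hex k := by omega
        simp [collapse_eq hmono hex, Nat.mul_add_div, h1, h2, not_lt.2 h]

theorem thresholdEquiv_symm_two_mul (hmono : ∀ k, Monotone (P k)) (hex : ∀ k, ∃ y, P k y)
    (k : ℕ) : (thresholdEquiv hmono hex).symm (2 * k) = Nat.pair k (threshold hex k) := by
  simp [thresholdEquiv]

theorem primrec_thresholdEquiv (hP : PrimrecRel P) (hmono : ∀ k, Monotone (P k))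
    (hex : ∀ k, ∃ y, P k y) : Primrec (thresholdEquiv hmono hex) :=
  (primrec₂_collapse hP).comp (Primrec.fst.comp Primrec.unpair) (Primrec.snd.comp Primrec.unpair)

end Threshold

section Halting

open Nat.Partrec

/-- The bound on the output makes the least `s` with `HaltsWithin c n s` at least the output of
`c` on `n`. -/
def HaltsWithin (c : Code) (n s : ℕ) : Prop := (Code.evaln s c n).getD (s + 1) ≤ s

instance (c : Code) : DecidableRel (HaltsWithin c) := fun _ _ => Nat.decLe _ _

theorem haltsWithin_iff {c : Code} {n s : ℕ} :
    HaltsWithin c n s ↔ ∃ v ∈ Code.evaln s c n, v ≤ s := by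
  rw [HaltsWithin]
  cases Code.evaln s c n <;> simp

theorem monotone_haltsWithin (c : Code) (n : ℕ) : Monotone (HaltsWithin c n) :=
  fun _ _ hst h => by
    obtain ⟨v, hv, hvs⟩ := haltsWithin_iff.1 h
    exact haltsWithin_iff.2 ⟨v, Code.evaln_mono hst hv, hvs.trans hst⟩

theorem primrecRel_haltsWithin (c : Code) : PrimrecRel (HaltsWithin c) :=
  Primrec.nat_le.comp
    (Primrec.option_getD.comp
      (Code.primrec_evaln.comp ((Primrec.snd.pair (Primrec.const c)).pair Primrec.fst))
      (Primrec.succ.comp Primrec.snd))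
    Primrec.snd

variable {c : Code} {F : ℕ → ℕ}

theorem exists_haltsWithin (hc : c.eval = F) (n : ℕ) : ∃ s, HaltsWithin c n s := by
  obtain ⟨s, hs⟩ := Code.evaln_complete.1 (show F n ∈ c.eval n by simp [hc])
  exact ⟨max s (F n),
    haltsWithin_iff.2 ⟨F n, Code.evaln_mono (le_max_left _ _) hs, le_max_right _ _⟩⟩

theorem le_of_haltsWithin (hc : c.eval = F) {n s : ℕ} (h : HaltsWithin c n s) : F n ≤ s := by
  obtain ⟨v, hv, hvs⟩ := haltsWithin_iff.1 h
  have hv' := Code.evaln_sound hv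
  rw [hc] at hv'
  rwa [← Part.mem_some_iff.1 hv']

end Halting

theorem exists_primrec_equiv_symm_two_mul_ge {F : ℕ → ℕ} (hF : Computable F) :
    ∃ σ : ℕ ≃ ℕ, Primrec σ ∧ ∀ k, F k ≤ σ.symm (2 * k) := by
  obtain ⟨c, hc⟩ := Nat.Partrec.Code.exists_code.1 (Partrec.nat_iff.1 hF)
  refine ⟨thresholdEquiv (monotone_haltsWithin c) (exists_haltsWithin hc),
    primrec_thresholdEquiv (primrecRel_haltsWithin c) _ _, fun k => ?_⟩
  rw [thresholdEquiv_symm_two_mul]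
  exact (le_of_haltsWithin hc (Nat.find_spec (exists_haltsWithin hc k))).trans
    (Nat.right_le_pair _ _)

theorem exists_primrec_equiv_symm_not_dominated :
    ∃ σ : ℕ ≃ ℕ, Primrec σ ∧
      ∀ G : ℕ → ℕ, Primrec G → ∃ j, G j < σ.symm j := by
  obtain ⟨σ, hσ, hge⟩ := exists_primrec_equiv_symm_two_mul_ge
    (computable₂_ack.comp Computable.id Computable.id)
  refine ⟨σ, hσ, fun G hG => ?_⟩
  obtain ⟨m, hm⟩ := exists_lt_ack_of_nat_primrec
    (Primrec.nat_iff.1 (hG.comp (Primrec.nat_mul.comp (Primrec.const 2) Primrec.id)))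
  exact ⟨2 * m, (hm m).trans_le (hge m)⟩

end InjectionStructure

open InjectionStructure

/-- There is a punctual injection structure, all of whose orbits are finite with
only finitely many orbits of each size, that is computably categorical but not
punctually categorical. -/
theorem pathological_injection_structure :
    ∃ f : ℕ → ℕ, Primrec f ∧ Function.Injective f ∧
      (∀ a : ℕ, (Orbit f a).Finite) ∧
      (∀ n : ℕ, {O : Set ℕ | (∃ a : ℕ, O = Orbit f a) ∧ O.ncard = n}.Finite) ∧
      (∀ g : ℕ → ℕ, Computable g → Function.Injective g →
        (∃ h : ℕ → ℕ, Function.Bijective h ∧ ∀ n : ℕ, h (f n) = g (h n)) →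
        ∃ h : ℕ → ℕ, Computable h ∧ Function.Bijective h ∧
          ∀ n : ℕ, h (f n) = g (h n)) ∧
      (∃ g : ℕ → ℕ, Primrec g ∧ Function.Injective g ∧
        (∃ h : ℕ → ℕ, Function.Bijective h ∧ ∀ n : ℕ, h (f n) = g (h n)) ∧
        ¬∃ h h' : ℕ → ℕ, Function.LeftInverse h' h ∧ Function.RightInverse h' h ∧
          (∀ n : ℕ, h (f n) = g (h n)) ∧ Primrec h ∧ Primrec h') := by
  obtain ⟨σ, hσ, hσ_large⟩ := exists_primrec_equiv_symm_not_dominated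
  refine ⟨blockCycle id, primrec_blockCycle Primrec.id, blockCycle_injective,
    orbit_blockCycle_finite,
    fun n => (setOf_orbit_blockCycle_ncard_subsingleton injective_id n).finite,
    fun g hg _ ⟨e, he, hcomm⟩ =>
      computablyCategorical_blockCycle Primrec.id injective_id hg he hcomm,
    blockCycle σ, primrec_blockCycle hσ, blockCycle_injective,
    exists_bijective_semiconj_blockCycle σ.symm fun j => σ.apply_symm_apply j, ?_⟩
  rintro ⟨h, h', hleft, -, hcomm, hh, -⟩
  obtain ⟨j, hj⟩ := hσ_large _ (hh.comp (primrec_blockStart Primrec.id))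
  exact hj.not_ge (symm_le_of_semiconj_blockCycle injective_id σ hleft.injective hcomm j)
end
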